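/- arXiv:1009.0424 — 2 statements merged into one kernel-verified Lean document; each statement's English description precedes it below -/
import Mathlib

section
/- Let $\alpha > 0$ and $\Psi_1, \Psi_2 \in L^\infty(\Omega)$ with $\Psi_i \ge \alpha$ a.e., where $\Omega \subseteq \mathbb{R}^3$ has finite measure. Let $w \in L^p(\Omega)^3$ satisfy $|w| \le \Psi_1$ a.e., and set $\eta = \alpha/(\alpha + \|\Psi_1 - \Psi_2\|_{L^\infty})$. Then $\widehat w := \eta\, w$ satisfies $|\widehat w| \le \Psi_2$ a.e. and $\|w - \widehat w\|_{L^p(\Omega)} \le \frac{1}{\alpha}\|w\|_{L^p(\Omega)}\,\|\Psi_1 - \Psi_2\|_{L^\infty(\Omega)}$. -/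
open MeasureTheory
open scoped ENNReal

/-!
Put `D = ‖Ψ₁ - Ψ₂‖_∞` and `η = α / (α + D)`. Almost everywhere `|w| ≤ Ψ₁ ≤ Ψ₂ + D`, and
`η (Ψ₂ + D) ≤ Ψ₂` exactly because `Ψ₂ ≥ α`. For the distance, `w - η w = (1 - η) w` and
`1 - η = D / (α + D) ≤ D / α`.
-/

theorem div_add_mul_le_of_le_add {α D a t : ℝ} (hα : 0 < α) (hD : 0 ≤ D) (ha : α ≤ a)
    (ht : t ≤ a + D) : α / (α + D) * t ≤ a := by
  have hαD : 0 < α + D := by linarith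
  calc α / (α + D) * t ≤ α / (α + D) * (a + D) := by gcongr
    _ ≤ a := by
      rw [div_mul_eq_mul_div, div_le_iff₀ hαD]
      nlinarith

theorem norm_div_add_smul_le_of_norm_le_add {E : Type*} [NormedAddCommGroup E]
    [NormedSpace ℝ E] {α D a : ℝ} {v : E} (hα : 0 < α) (hD : 0 ≤ D) (ha : α ≤ a)
    (hv : ‖v‖ ≤ a + D) : ‖(α / (α + D)) • v‖ ≤ a := by
  rw [norm_smul, Real.norm_of_nonneg (by positivity)]
  exact div_add_mul_le_of_le_add hα hD ha hv

theorem abs_one_sub_div_add_le {α D : ℝ} (hα : 0 < α) (hD : 0 ≤ D) :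
    |1 - α / (α + D)| ≤ D / α := by
  have hαD : 0 < α + D := by linarith
  have h : 1 - α / (α + D) = D / (α + D) := by field_simp; ring
  rw [h, abs_of_nonneg (by positivity)]
  exact div_le_div_of_nonneg_left hD hα (by linarith)

theorem eLpNorm_sub_smul_self {Ω E : Type*} [MeasurableSpace Ω] [NormedAddCommGroup E]
    [NormedSpace ℝ E] (c : ℝ) (f : Ω → E) (p : ℝ≥0∞) (μ : Measure Ω) :
    eLpNorm (fun x => f x - c • f x) p μ = ‖1 - c‖ₑ * eLpNorm f p μ := by
  have h : (fun x => f x - c • f x) = (1 - c) • f := by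
    funext x
    simp [sub_smul]
  rw [h, eLpNorm_const_smul]

theorem projection_lemma_general {Ω : Type*} [MeasurableSpace Ω] (μ : Measure Ω)
    (α p : ℝ) (hα : 0 < α)
    (Ψ₁ Ψ₂ : Ω → ℝ)
    (hΨ₁b : MemLp Ψ₁ ⊤ μ) (hΨ₂b : MemLp Ψ₂ ⊤ μ)
    (hΨ₂ : ∀ᵐ x ∂μ, α ≤ Ψ₂ x)
    (w : Ω → EuclideanSpace ℝ (Fin 3))
    (hw : ∀ᵐ x ∂μ, ‖w x‖ ≤ Ψ₁ x) :
    (∀ᵐ x ∂μ,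
      ‖(α / (α + (eLpNorm (Ψ₁ - Ψ₂) ⊤ μ).toReal)) • w x‖ ≤ Ψ₂ x) ∧
    (eLpNorm (fun x => w x - (α / (α + (eLpNorm (Ψ₁ - Ψ₂) ⊤ μ).toReal)) • w x)
        (ENNReal.ofReal p) μ).toReal ≤
      (1 / α) * (eLpNorm w (ENNReal.ofReal p) μ).toReal *
        (eLpNorm (Ψ₁ - Ψ₂) ⊤ μ).toReal := by
  set D := (eLpNorm (Ψ₁ - Ψ₂) ⊤ μ).toReal
  have hD : 0 ≤ D := ENNReal.toReal_nonneg
  have hdiff : ∀ᵐ x ∂μ, |Ψ₁ x - Ψ₂ x| ≤ D := by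
    have hΨ := hΨ₁b.sub hΨ₂b
    simpa only [D, Pi.sub_apply, Real.norm_eq_abs, toReal_eLpNorm hΨ.aestronglyMeasurable]
      using ae_le_lpNorm_exponent_top hΨ
  refine ⟨?_, ?_⟩
  · filter_upwards [hw, hΨ₂, hdiff] with x hwx hΨ₂x hx
    refine norm_div_add_smul_le_of_norm_le_add hα hD hΨ₂x (hwx.trans ?_)
    linarith [(abs_le.mp hx).2]
  · rw [eLpNorm_sub_smul_self, ENNReal.toReal_mul, toReal_enorm, Real.norm_eq_abs]
    calc |1 - α / (α + D)| * (eLpNorm w (ENNReal.ofReal p) μ).toReal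
        ≤ D / α * (eLpNorm w (ENNReal.ofReal p) μ).toReal := by
          gcongr
          exact abs_one_sub_div_add_le hα hD
      _ = 1 / α * (eLpNorm w (ENNReal.ofReal p) μ).toReal * D := by ring

/-- Quantitative projection lemma (Lemma 4.2): a field `w` with `|w| ≤ Ψ₁` is
approximated in `L^p` by `ŵ = η w` with `|ŵ| ≤ Ψ₂`, at distance controlled by
`‖Ψ₁ - Ψ₂‖_{L^∞}`, where `η = α/(α + ‖Ψ₁ - Ψ₂‖_{L^∞})`. -/
theorem projection_lemma {Ω : Type*} [MeasurableSpace Ω] (μ : Measure Ω) [IsFiniteMeasure μ]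
    (α p : ℝ) (hα : 0 < α) (hp : 1 ≤ p)
    (Ψ₁ Ψ₂ : Ω → ℝ) (hΨ₁m : Measurable Ψ₁) (hΨ₂m : Measurable Ψ₂)
    (hΨ₁b : MemLp Ψ₁ ⊤ μ) (hΨ₂b : MemLp Ψ₂ ⊤ μ)
    (hΨ₁ : ∀ᵐ x ∂μ, α ≤ Ψ₁ x) (hΨ₂ : ∀ᵐ x ∂μ, α ≤ Ψ₂ x)
    (w : Ω → EuclideanSpace ℝ (Fin 3)) (hwp : MemLp w (ENNReal.ofReal p) μ)
    (hw : ∀ᵐ x ∂μ, ‖w x‖ ≤ Ψ₁ x) :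
    (∀ᵐ x ∂μ,
      ‖(α / (α + (eLpNorm (Ψ₁ - Ψ₂) ⊤ μ).toReal)) • w x‖ ≤ Ψ₂ x) ∧
    (eLpNorm (fun x => w x - (α / (α + (eLpNorm (Ψ₁ - Ψ₂) ⊤ μ).toReal)) • w x)
        (ENNReal.ofReal p) μ).toReal ≤
      (1 / α) * (eLpNorm w (ENNReal.ofReal p) μ).toReal *
        (eLpNorm (Ψ₁ - Ψ₂) ⊤ μ).toReal :=
  projection_lemma_general μ α p hα Ψ₁ Ψ₂ hΨ₁b hΨ₂b hΨ₂ w hw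
end

section
/- Under the hypotheses of the previous penalization setup, if additionally $\nu : Q \to [a_*, a^*]$ with $a_* > 0$, $\Psi \ge \alpha > 0$, and $\int_Q \nu\, k_\varepsilon(|u|^p - \Psi^p)|u|^p \le M$, then $\int_Q k_\varepsilon(|u|^p - \Psi^p) \le \frac{M}{a_* \alpha^p} + \frac{1}{\alpha^p}\int_Q \Psi^p$. -/
open MeasureTheory

/-!
Since `k ≥ 0` and `k = 1` where `|u|^p ≤ Ψ^p`, pointwise `k (|u|^p - Ψ^p) (Ψ^p - |u|^p) ≤ Ψ^p`.
Together with `α^p ≤ Ψ^p` and `a_* ≤ ν` this gives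
`α^p k ≤ Ψ^p k ≤ k |u|^p + Ψ^p ≤ ν k |u|^p / a_* + Ψ^p`; divide by `α^p` and integrate.
-/

lemma penalty_mul_sub_le {k : ℝ → ℝ} (hk0 : ∀ s, 0 ≤ k s) (hk1 : ∀ s ≤ (0 : ℝ), k s = 1)
    {a b : ℝ} (ha : 0 ≤ a) (hb : 0 ≤ b) : k (a - b) * (b - a) ≤ b := by
  rcases le_or_gt a b with hab | hab
  · rw [hk1 _ (sub_nonpos.mpr hab)]
    linarith
  · nlinarith [hk0 (a - b)]

lemma le_div_add_div_of_mul_sub_le {K a b c β ν : ℝ} (hK : 0 ≤ K) (ha : 0 ≤ a) (hc : 0 < c)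
    (hβ : 0 < β) (hcν : c ≤ ν) (hβb : β ≤ b) (hKab : K * (b - a) ≤ b) :
    K ≤ ν * (K * a) / (c * β) + b / β := by
  have hKa : c * (K * a) ≤ ν * (K * a) := mul_le_mul_of_nonneg_right hcν (mul_nonneg hK ha)
  have hKβ : K * β ≤ K * b := mul_le_mul_of_nonneg_left hβb hK
  rw [← mul_div_mul_left b β hc.ne', ← add_div, le_div_iff₀ (mul_pos hc hβ)]
  linarith [mul_le_mul_of_nonneg_left hKβ hc.le, mul_le_mul_of_nonneg_left hKab hc.le]

theorem penalization_L1_bound_general {Q : Type*} [MeasurableSpace Q] (μ : Measure Q)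
    (p α astar asup M : ℝ) (hp : 1 < p) (hα : 0 < α)
    (ha : 0 < astar)
    (k : ℝ → ℝ) (hkpos : ∀ s, 0 < k s)
    (hk1 : ∀ s ≤ (0 : ℝ), k s = 1)
    (u : Q → EuclideanSpace ℝ (Fin 3)) (Ψ ν : Q → ℝ)
    (hΨ : ∀ x, α ≤ Ψ x) (hν : ∀ x, astar ≤ ν x ∧ ν x ≤ asup)
    (hI1 : Integrable (fun x => k (‖u x‖ ^ p - Ψ x ^ p)) μ)
    (hI2 : Integrable (fun x => Ψ x ^ p) μ)
    (hI3 : Integrable (fun x => ν x * (k (‖u x‖ ^ p - Ψ x ^ p) * ‖u x‖ ^ p)) μ)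
    (hM : ∫ x, ν x * (k (‖u x‖ ^ p - Ψ x ^ p) * ‖u x‖ ^ p) ∂μ ≤ M) :
    ∫ x, k (‖u x‖ ^ p - Ψ x ^ p) ∂μ ≤
      M / (astar * α ^ p) + (1 / α ^ p) * ∫ x, Ψ x ^ p ∂μ := by
  have hαp : 0 < α ^ p := Real.rpow_pos_of_pos hα p
  have hk0 : ∀ s, 0 ≤ k s := fun s => (hkpos s).le
  have hpointwise : ∀ x, k (‖u x‖ ^ p - Ψ x ^ p) ≤
      ν x * (k (‖u x‖ ^ p - Ψ x ^ p) * ‖u x‖ ^ p) / (astar * α ^ p) + Ψ x ^ p / α ^ p :=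
    fun x => le_div_add_div_of_mul_sub_le (hk0 _) (by positivity) ha hαp (hν x).1
      (Real.rpow_le_rpow hα.le (hΨ x) (by linarith))
      (penalty_mul_sub_le hk0 hk1 (by positivity)
        (Real.rpow_nonneg (hα.le.trans (hΨ x)) p))
  calc ∫ x, k (‖u x‖ ^ p - Ψ x ^ p) ∂μ
      ≤ ∫ x, (ν x * (k (‖u x‖ ^ p - Ψ x ^ p) * ‖u x‖ ^ p) / (astar * α ^ p)
          + Ψ x ^ p / α ^ p) ∂μ :=
        integral_mono hI1 ((hI3.div_const _).add (hI2.div_const _)) hpointwise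
    _ = (∫ x, ν x * (k (‖u x‖ ^ p - Ψ x ^ p) * ‖u x‖ ^ p) ∂μ) / (astar * α ^ p)
          + (∫ x, Ψ x ^ p ∂μ) / α ^ p := by
        rw [integral_add (hI3.div_const _) (hI2.div_const _), integral_div, integral_div]
    _ ≤ M / (astar * α ^ p) + (1 / α ^ p) * ∫ x, Ψ x ^ p ∂μ := by
        rw [one_div_mul_eq_div]
        gcongr

/-- Uniform `L¹` bound on the penalization term (Lemma 4.3):
if `∫ ν k_ε(|u|^p - Ψ^p)|u|^p ≤ M` then
`∫ k_ε(|u|^p - Ψ^p) ≤ M/(a_* α^p) + (1/α^p) ∫ Ψ^p`. -/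
theorem penalization_L1_bound {Q : Type*} [MeasurableSpace Q] (μ : Measure Q)
    [IsFiniteMeasure μ]
    (ε p α astar asup M : ℝ) (hε : ε ∈ Set.Ioo (0 : ℝ) 1) (hp : 1 < p) (hα : 0 < α)
    (ha : 0 < astar) (haa : astar ≤ asup)
    (k : ℝ → ℝ) (hkc : Continuous k) (hkm : Monotone k) (hkpos : ∀ s, 0 < k s)
    (hk1 : ∀ s ≤ (0 : ℝ), k s = 1)
    (u : Q → EuclideanSpace ℝ (Fin 3)) (Ψ ν : Q → ℝ)
    (hΨ : ∀ x, α ≤ Ψ x) (hν : ∀ x, astar ≤ ν x ∧ ν x ≤ asup)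
    (hI1 : Integrable (fun x => k (‖u x‖ ^ p - Ψ x ^ p)) μ)
    (hI2 : Integrable (fun x => Ψ x ^ p) μ)
    (hI3 : Integrable (fun x => ν x * (k (‖u x‖ ^ p - Ψ x ^ p) * ‖u x‖ ^ p)) μ)
    (hM : ∫ x, ν x * (k (‖u x‖ ^ p - Ψ x ^ p) * ‖u x‖ ^ p) ∂μ ≤ M) :
    ∫ x, k (‖u x‖ ^ p - Ψ x ^ p) ∂μ ≤
      M / (astar * α ^ p) + (1 / α ^ p) * ∫ x, Ψ x ^ p ∂μ :=
  penalization_L1_bound_general μ p α astar asup M hp hα ha k hkpos hk1 u Ψ ν hΨ hν hI1 hI2 hI3 hM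
end
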